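/- arXiv:2512.01001 — 7 statements merged into one kernel-verified Lean document; each statement's English description precedes it below -/
import Mathlib

section
/- There exists a strategy with no consistent run: in the one-player game with action set A = {0,1} and stages indexed by the non-positive integers, the strategy s that plays 0 at a position if all previous actions were 1, and plays 1 otherwise, admits no run consistent with s. -/
/-- Stages: non-positive integers. -/
abbrev Stage : Type := {n : ℤ // n ≤ 0}

/-- A run assigns an action to each stage. -/
abbrev Run (A : Type) : Type := Stage → A

/-- A position at stage `n` records the actions at all stages `k < n`. -/
abbrev Position (A : Type) (n : ℤ) : Type := {k : ℤ // k < n} → A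

/-- The space of all positions. -/
abbrev Pos (A : Type) : Type := Σ n : Stage, Position A n.1

/-- The position induced by a run `r` at stage `n`. -/
def restrictRun {A : Type} (r : Run A) (n : Stage) : Position A n.1 :=
  fun k => r ⟨k.1, le_trans k.2.le n.2⟩

/- The strategy that plays `0` if all previous actions were `1`, and `1` otherwise. -/
open Classical in
noncomputable def sZero : Pos (Fin 2) → Fin 2 :=
  fun q => if (∀ k, q.2 k = 1) then 0 else 1

/-! A run consistent with `sZero` plays `0` exactly when all earlier moves were `1`. A `0` at
stage `n` would force `1`s before `n`, but then stage `n - 1` sees only `1`s and must play `0`.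
So the run is constantly `1`, and then stage `0` sees only `1`s and must play `0`. -/

def IsConsistentRun {A : Type} (s : Pos A → A) (r : Run A) : Prop :=
  ∀ n : Stage, r n = s ⟨n, restrictRun r n⟩

theorem sZero_eq_zero_iff (q : Pos (Fin 2)) : sZero q = 0 ↔ ∀ k, q.2 k = 1 := by
  unfold sZero
  split_ifs with h
  · exact iff_of_true rfl h
  · exact iff_of_false (by decide) h

section ConsistentRun

variable {r : Run (Fin 2)} (hr : IsConsistentRun sZero r)
include hr

theorem IsConsistentRun.eq_zero_iff (n : Stage) :
    r n = 0 ↔ ∀ k : Stage, k.1 < n.1 → r k = 1 := by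
  rw [hr n, sZero_eq_zero_iff]
  exact ⟨fun h k hk => h ⟨k.1, hk⟩, fun h k => h _ k.2⟩

theorem IsConsistentRun.eq_one (n : Stage) : r n = 1 := by
  by_contra hn
  have hpast := (hr.eq_zero_iff n).1 (by omega)
  let m : Stage := ⟨n.1 - 1, by omega⟩
  have hm : r m ≠ 0 := by
    rw [hpast m (by simp [m])]
    decide
  exact hm ((hr.eq_zero_iff m).2 fun k hk => hpast k (hk.trans (by simp [m])))

end ConsistentRun

/-- the strategy `sZero` admits no consistent run. -/
theorem no_consistent_run :
    ¬ ∃ r : Run (Fin 2), ∀ n : Stage, r n = sZero ⟨n, restrictRun r n⟩ := by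
  rintro ⟨r, hr⟩
  have hr : IsConsistentRun sZero r := hr
  have h0 : r ⟨0, le_rfl⟩ = 0 := (hr.eq_zero_iff _).2 fun k _ => hr.eq_one k
  exact absurd h0 (by simp [hr.eq_one])
end

section
/- If a strategy profile s is such that for every player i the strategy s_i permits the segment Ω (i.e., some run in Ω is consistent with s_i), then there is exactly one run in Ω consistent with the full profile s. -/
/-- A run `r` is consistent with a strategy `si` of player `i`: at every stage where `i` is the
active player along `r`, the action of `r` is the one recommended by `si`. -/
def ConsistentI {I A : Type} (ι : Pos A → I) (i : I) (si : Pos A → A) (r : Run A) : Prop :=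
  ∀ n : Stage, ι ⟨n, restrictRun r n⟩ = i → r n = si ⟨n, restrictRun r n⟩

/-- A run `r` is consistent with a strategy profile `s`. -/
def ConsistentP {I A : Type} (ι : Pos A → I) (s : I → Pos A → A) (r : Run A) : Prop :=
  ∀ n : Stage, r n = s (ι ⟨n, restrictRun r n⟩) ⟨n, restrictRun r n⟩

/-- Two runs differ in at most finitely many coordinates (same segment). -/
def FinDiff {A : Type} (r r' : Run A) : Prop := {k : Stage | r k ≠ r' k}.Finite

/-- Player `i` is active infinitely often along the run `r`. -/
def ActiveIO {I A : Type} (ι : Pos A → I) (i : I) (r : Run A) : Prop :=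
  {n : Stage | ι ⟨n, restrictRun r n⟩ = i}.Infinite

/-!
Below some stage `N` every permitting run `wᵢ` coincides with the given run `r₀`, because there
are finitely many players. Hence along `r₀` every stage `n < N` is played as the profile
prescribes: its owner `i` sees the same history as in `wᵢ`, and `wᵢ` follows `sᵢ` there. Keeping
`r₀` below `N` and letting the profile choose the finitely many actions from `N` up to `0` gives a
consistent run of the segment. Two consistent runs agreeing below some stage agree at each later
stage by induction, since a stage's action is determined by the history before it.
-/

section

variable {A : Type} {r r' : Run A}

theorem restrictRun_congr {n : Stage} (h : ∀ k : Stage, k.1 < n.1 → r k = r' k) :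
    restrictRun r n = restrictRun r' n :=
  funext fun k => h _ k.2

theorem FinDiff.exists_eq_below (h : FinDiff r r') :
    ∃ N : ℤ, ∀ k : Stage, k.1 < N → r k = r' k := by
  obtain ⟨N, hN⟩ := (h.image Subtype.val).bddBelow
  exact ⟨N, fun k hk => by_contra fun hne => absurd (hN ⟨k, hne, rfl⟩) (by omega)⟩

theorem finDiff_of_eq_below {N : ℤ} (h : ∀ k : Stage, k.1 < N → r k = r' k) : FinDiff r r' := by
  refine ((Set.finite_Icc N 0).preimage Subtype.val_injective.injOn).subset fun k hk => ?_
  exact ⟨not_lt.1 fun hkN => hk (h k hkN), k.2⟩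

theorem exists_eq_below_of_forall_finDiff {I : Type} [Finite I] {w : I → Run A}
    (h : ∀ i, FinDiff (w i) r) : ∃ N : ℤ, ∀ i (k : Stage), k.1 < N → w i k = r k := by
  choose N hN using fun i => (h i).exists_eq_below
  obtain ⟨L, hL⟩ := (Set.finite_range N).bddBelow
  exact ⟨L, fun i k hk => hN i k (lt_of_lt_of_le hk (hL ⟨i, rfl⟩))⟩

end

section

variable {I A : Type} (ι : Pos A → I) (s : I → Pos A → A)

def ConsistentAt (r : Run A) (n : Stage) : Prop :=
  r n = s (ι ⟨n, restrictRun r n⟩) ⟨n, restrictRun r n⟩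

theorem consistentAt_of_forall_consistentI {w : I → Run A} {r : Run A} {n : Stage}
    (hw : ∀ i, ConsistentI ι i (s i) (w i)) (hwr : ∀ i (k : Stage), k.1 ≤ n.1 → w i k = r k) :
    ConsistentAt ι s r n := by
  set i := ι ⟨n, restrictRun r n⟩
  have hpos : restrictRun (w i) n = restrictRun r n :=
    restrictRun_congr fun k hk => hwr i k hk.le
  have hwi : w i n = s i ⟨n, restrictRun (w i) n⟩ := hw i n (by rw [hpos])
  rw [ConsistentAt, ← hwr i n le_rfl, hwi, hpos]

theorem exists_consistentAt_from (N : ℤ) (r : Run A) :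
    ∃ r' : Run A, (∀ k : Stage, k.1 < N → r' k = r k) ∧
      ∀ n : Stage, N ≤ n.1 → ConsistentAt ι s r' n := by
  rcases lt_or_ge 1 N with hN | hN
  · exact ⟨r, fun _ _ => rfl, fun n hn => absurd n.2 (by omega)⟩
  induction N, hN using Int.leInductionDown generalizing r with
  | base => exact ⟨r, fun _ _ => rfl, fun n hn => absurd n.2 (by omega)⟩
  | pred N hN ih =>
    classical
    obtain ⟨t, ht⟩ : ∃ t : Stage, t.1 = N - 1 := ⟨⟨N - 1, by omega⟩, rfl⟩
    obtain ⟨r', hr'_low, hr'_high⟩ :=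
      ih (Function.update r t (s (ι ⟨t, restrictRun r t⟩) ⟨t, restrictRun r t⟩))
    have hr'_below_t : ∀ k : Stage, k.1 < t.1 → r' k = r k := fun k hk => by
      rw [hr'_low k (by omega), Function.update_of_ne (by rintro rfl; omega)]
    refine ⟨r', ht ▸ hr'_below_t, fun n hn => ?_⟩
    rcases eq_or_lt_of_le hn with htn | hNn
    · obtain rfl : n = t := Subtype.ext (by omega)
      rw [ConsistentAt, hr'_low n (by omega), Function.update_self,
        restrictRun_congr hr'_below_t]
    · exact hr'_high n (by omega)

theorem ConsistentP.eq_of_eq_below {r r' : Run A} (hr : ConsistentP ι s r)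
    (hr' : ConsistentP ι s r') {M : ℤ} (hM : ∀ k : Stage, k.1 < M → r k = r' k) : r = r' := by
  have key : ∀ m, M ≤ m → ∀ k : Stage, k.1 < m → r k = r' k := by
    intro m hm
    induction m, hm using Int.leInduction with
    | base => exact hM
    | succ m _ ih =>
      intro k _
      rw [hr k, hr' k, restrictRun_congr fun j hj => ih j (by omega)]
  funext n
  exact key (max M (n.1 + 1)) (le_max_left _ _) n (by omega)

end

theorem unique_consistent_run_in_segment_general (I A : Type) [Fintype I]
    (ι : Pos A → I) (s : I → Pos A → A) (r0 : Run A)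
    (hperm : ∀ i : I, ∃ r : Run A, FinDiff r r0 ∧ ConsistentI ι i (s i) r) :
    ∃! r : Run A, FinDiff r r0 ∧ ConsistentP ι s r := by
  choose w hw_fin hw_cons using hperm
  obtain ⟨N, hw_low⟩ := exists_eq_below_of_forall_finDiff hw_fin
  obtain ⟨r, hr_low, hr_high⟩ := exists_consistentAt_from ι s N r0
  have hr : ConsistentP ι s r := fun n =>
    (lt_or_ge n.1 N).elim
      (fun hn => consistentAt_of_forall_consistentI ι s hw_cons fun i k hk =>
        (hw_low i k (by omega)).trans (hr_low k (by omega)).symm)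
      (hr_high n)
  refine ⟨r, ⟨finDiff_of_eq_below hr_low, hr⟩, fun r' ⟨hr'_fin, hr'⟩ => ?_⟩
  obtain ⟨M, hr'_low⟩ := hr'_fin.exists_eq_below
  exact hr'.eq_of_eq_below ι s hr (M := min M N) fun k hk =>
    (hr'_low k (by omega)).trans (hr_low k (by omega)).symm

/-- if every player's strategy permits the segment of the run `r0` (some run of
that segment is consistent with it), then exactly one run of that segment is consistent with
the whole profile. -/
theorem unique_consistent_run_in_segment (I A : Type) [Fintype I] [Nonempty I] [Fintype A]
    (hA : 2 ≤ Fintype.card A) (ι : Pos A → I) (s : I → Pos A → A) (r0 : Run A)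
    (hperm : ∀ i : I, ∃ r : Run A, FinDiff r r0 ∧ ConsistentI ι i (s i) r) :
    ∃! r : Run A, FinDiff r r0 ∧ ConsistentP ι s r :=
  unique_consistent_run_in_segment_general I A ι s r0 hperm
end

section
/- Given any (possibly empty) collection {Ω_z}_{z∈Z} of segments and runs r_z ∈ Ω_z (one per segment), each player i has a strategy s_i such that: (a) every r_z is consistent with s_i, and (b) any run r along which player i is active infinitely often and which lies in no Ω_z is not consistent with s_i. -/
section SwitchRule

open Classical

variable {α β : Type*} [Preorder α]

/- If some move is preceded only by `b`s, so is an earlier one, which is then both `a` and `b`;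
otherwise every move is `b`, and the first case holds after all. -/
theorem not_forall_eq_ite_of_forall_exists_lt {S : Set α} (hne : S.Nonempty)
    (hlt : ∀ m ∈ S, ∃ k ∈ S, k < m) {r : α → β} {a b : β} (hab : a ≠ b) :
    ¬ ∀ n ∈ S, r n = if ∀ k < n, k ∈ S → r k = b then a else b := by
  intro hr
  by_cases hfirst : ∃ m ∈ S, ∀ k < m, k ∈ S → r k = b
  · obtain ⟨m, hmS, hm⟩ := hfirst
    obtain ⟨k, hkS, hkm⟩ := hlt m hmS
    have hk : r k = a := by
      rw [hr k hkS, if_pos fun j (hjk : j < k) hjS => hm j (hjk.trans hkm) hjS]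
    exact hab (hk.symm.trans (hm k hkm hkS))
  · push Not at hfirst
    have hallb : ∀ n ∈ S, r n = b := fun n hnS => by
      rw [hr n hnS, if_neg (by simpa using hfirst n hnS)]
    obtain ⟨n, hnS⟩ := hne
    obtain ⟨k, hkn, hkS, hk⟩ := hfirst n hnS
    exact hk (hallb k hkS)

end SwitchRule

theorem Stage.finite_Ici (n : Stage) : (Set.Ici n).Finite :=
  (Set.finite_Icc n ⟨0, le_rfl⟩).subset fun k hk => ⟨hk, k.2⟩

theorem Stage.exists_lt_of_infinite {S : Set Stage} (hS : S.Infinite) (m : Stage) :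
    ∃ k ∈ S, k < m := by
  obtain ⟨k, hkS, hkm⟩ := (hS.sdiff (Stage.finite_Ici m)).nonempty
  exact ⟨k, hkS, lt_of_not_ge hkm⟩

theorem finDiff_of_restrictRun_eq {A : Type} {r r' : Run A} {n : Stage}
    (h : restrictRun r n = restrictRun r' n) : FinDiff r r' :=
  (Stage.finite_Ici n).subset fun k hk => le_of_not_gt fun hkn => hk (congrFun h ⟨k.1, hkn⟩)

section SegmentStrategy

open Classical

variable {I A Z : Type} (ι : Pos A → I) (i : I) (f : Z → Run A) (a b : A)

noncomputable def segmentStrategy : Pos A → A := fun p =>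
  if h : ∃ z, p.2 = restrictRun (f z) p.1 then f h.choose p.1
  else if ∀ k : Stage, ∀ hk : k.1 < p.1.1,
      ι ⟨k, fun j => p.2 ⟨j.1, j.2.trans hk⟩⟩ = i → p.2 ⟨k.1, hk⟩ = b then a
  else b

variable {ι i f a b}

theorem consistentI_segmentStrategy (hone : ∀ z z' : Z, FinDiff (f z) (f z') → f z = f z')
    (z : Z) : ConsistentI ι i (segmentStrategy ι i f a b) (f z) := by
  intro n _
  have hpos : ∃ z', restrictRun (f z) n = restrictRun (f z') n := ⟨z, rfl⟩
  have hchoose : f z = f hpos.choose := hone _ _ (finDiff_of_restrictRun_eq hpos.choose_spec)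
  simp only [segmentStrategy, dif_pos hpos]
  exact congrFun hchoose n

theorem segmentStrategy_restrictRun_of_forall_not_finDiff {r : Run A}
    (hr : ∀ z, ¬ FinDiff r (f z)) (n : Stage) :
    segmentStrategy ι i f a b ⟨n, restrictRun r n⟩ =
      if ∀ k < n, ι ⟨k, restrictRun r k⟩ = i → r k = b then a else b := by
  have hoff : ¬ ∃ z, restrictRun r n = restrictRun (f z) n :=
    fun ⟨z, hz⟩ => hr z (finDiff_of_restrictRun_eq hz)
  simp only [segmentStrategy, dif_neg hoff]
  rfl

theorem not_consistentI_segmentStrategy (hab : a ≠ b) {r : Run A} (hio : ActiveIO ι i r)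
    (hr : ∀ z, ¬ FinDiff r (f z)) : ¬ ConsistentI ι i (segmentStrategy ι i f a b) r := by
  intro hcons
  refine not_forall_eq_ite_of_forall_exists_lt (r := r) hio.nonempty
    (fun m _ => Stage.exists_lt_of_infinite hio m) hab fun n hn => ?_
  rw [hcons n hn, segmentStrategy_restrictRun_of_forall_not_finDiff hr]
  rfl

end SegmentStrategy

theorem strategy_permitting_exactly_given_segments_general (I A : Type)
    [Fintype A] (hA : 2 ≤ Fintype.card A) (ι : Pos A → I)
    (Z : Type) (f : Z → Run A) (hone : ∀ z z' : Z, FinDiff (f z) (f z') → f z = f z')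
    (i : I) :
    ∃ si : Pos A → A,
      (∀ z : Z, ConsistentI ι i si (f z)) ∧
      (∀ r : Run A, ActiveIO ι i r → (∀ z : Z, ¬ FinDiff r (f z)) →
        ¬ ConsistentI ι i si r) := by
  obtain ⟨a, b, hab⟩ := Fintype.exists_pair_of_one_lt_card hA
  exact ⟨segmentStrategy ι i f a b, consistentI_segmentStrategy hone,
    fun r hio hr => not_consistentI_segmentStrategy hab hio hr⟩

/-- given a collection of segments, represented by one run `f z` per segment,
each player `i` has a strategy that (a) is consistent with every `f z`, and (b) is not
consistent with any run lying in none of these segments along which `i` is active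
infinitely often. -/
theorem strategy_permitting_exactly_given_segments (I A : Type) [Fintype I] [Nonempty I]
    [Fintype A] (hA : 2 ≤ Fintype.card A) (ι : Pos A → I)
    (Z : Type) (f : Z → Run A) (hone : ∀ z z' : Z, FinDiff (f z) (f z') → f z = f z')
    (i : I) :
    ∃ si : Pos A → A,
      (∀ z : Z, ConsistentI ι i si (f z)) ∧
      (∀ r : Run A, ActiveIO ι i r → (∀ z : Z, ¬ FinDiff r (f z)) →
        ¬ ConsistentI ι i si r) :=
  strategy_permitting_exactly_given_segments_general I A hA ι Z f hone i
end

section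
/- For every run r there exists a strategy profile s such that r is the unique run consistent with s, provided along every run some player is active infinitely often. -/
instance : Infinite Stage := Set.infinite_coe_iff.mpr (Set.Iic_infinite (0 : ℤ))

namespace Stage

def ofLT (n : Stage) (k : {k : ℤ // k < n.1}) : Stage := ⟨k.1, le_trans k.2.le n.2⟩

theorem ofLT_injective (n : Stage) : Function.Injective (ofLT n) := by
  intro k l h
  simpa [ofLT, Subtype.ext_iff] using h

theorem finite_setOf_le (n : Stage) : {k : Stage | n ≤ k}.Finite :=
  ((Set.finite_Icc n.1 0).preimage Subtype.val_injective.injOn).subset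
    fun k hk => ⟨hk, k.2⟩

theorem infinite_preimage_ofLT_iff (n : Stage) (T : Set Stage) :
    (ofLT n ⁻¹' T).Infinite ↔ T.Infinite := by
  have hsplit : T ⊆ ofLT n '' (ofLT n ⁻¹' T) ∪ {k | n ≤ k} := fun k hk => by
    rcases lt_or_ge k n with hlt | hle
    · exact Or.inl ⟨⟨k.1, hlt⟩, hk, rfl⟩
    · exact Or.inr hle
  refine ⟨fun h => ?_, fun h hfin => ?_⟩
  · exact (h.image (ofLT_injective n).injOn).mono (Set.image_preimage_subset _ _)
  · exact h (((hfin.image _).union (finite_setOf_le n)).subset hsplit)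

end Stage

section Runs

variable {A : Type}

theorem restrictRun_eq_of_forall_lt {r r' : Run A} {n : Stage} (h : ∀ k < n, r' k = r k) :
    restrictRun r' n = restrictRun r n :=
  funext fun k => h (Stage.ofLT n k) k.2

theorem eq_of_forall_lt_of_restrictRun_eq {r r' : Run A} {n : Stage}
    (h : restrictRun r' n = restrictRun r n) : ∀ k < n, r' k = r k :=
  fun k hk => congrFun h ⟨k.1, hk⟩

/-- At the first difference both runs are at the same position. -/
theorem eq_of_finDiff_of_restrictRun_eq {r r' : Run A} (hfin : FinDiff r' r)
    (hfollow : ∀ n, restrictRun r' n = restrictRun r n → r' n = r n) : r' = r := by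
  by_contra hne
  obtain ⟨m, hm, hmin⟩ := Set.exists_min_image _ id hfin (Function.ne_iff.mp hne)
  refine hm (hfollow m (restrictRun_eq_of_forall_lt fun k hk => ?_))
  by_contra hdiff
  exact absurd (hmin k hdiff) (not_le.mpr hk)

theorem restrictRun_ne_of_not_finDiff {r r' : Run A} (hinf : ¬FinDiff r' r) (n : Stage) :
    restrictRun r' n ≠ restrictRun r n := fun h =>
  hinf <| (Stage.finite_setOf_le n).subset fun k hk =>
    not_lt.mp fun hlt => hk (eq_of_forall_lt_of_restrictRun_eq h k hlt)

end Runs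

open Classical in
/-- A form of Yablo's paradox. -/
theorem not_forall_eq_ite_infinite_setOf_ne {X A : Type} [Infinite X] {a b : A} (hab : a ≠ b)
    (x : X → A) : ¬∀ n, x n = if {k | x k ≠ a}.Infinite then a else b := by
  intro hx
  by_cases hinf : {k | x k ≠ a}.Infinite
  · simp only [hinf, if_true] at hx
    exact hinf (Set.finite_empty.subset fun k hk => hk (hx k))
  · simp only [hinf, if_false] at hx
    exact hinf (Set.infinite_univ.mono fun k _ => by simp [hx k, hab.symm])

open Classical in
noncomputable def singlingOutStrategy {A : Type} (r : Run A) (a b : A) (p : Pos A) : A :=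
  if p.2 = restrictRun r p.1 then r p.1
  else if {k | p.2 k ≠ a}.Infinite then a else b

section SinglingOut

variable {I A : Type} (ι : Pos A → I) (r : Run A) {a b : A}

theorem consistentP_singlingOutStrategy :
    ConsistentP ι (fun _ => singlingOutStrategy r a b) r := fun n => by
  simp [singlingOutStrategy]

theorem eq_of_consistentP_singlingOutStrategy (hab : a ≠ b) {r' : Run A}
    (hr' : ConsistentP ι (fun _ => singlingOutStrategy r a b) r') : r' = r := by
  by_cases hfin : FinDiff r' r
  · refine eq_of_finDiff_of_restrictRun_eq hfin fun n hn => ?_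
    simpa [singlingOutStrategy, hn] using hr' n
  · refine (not_forall_eq_ite_infinite_setOf_ne hab r' fun n => ?_).elim
    have hn := hr' n
    simp only [singlingOutStrategy, restrictRun_ne_of_not_finDiff hfin n, if_false] at hn
    rwa [show {k | restrictRun r' n k ≠ a} = Stage.ofLT n ⁻¹' {k | r' k ≠ a} from rfl,
      Stage.infinite_preimage_ofLT_iff] at hn

end SinglingOut

theorem profile_singling_out_run_general (I A : Type) [Fintype A]
    (hA : 2 ≤ Fintype.card A) (ι : Pos A → I)
    (r : Run A) :
    ∃ s : I → Pos A → A, ConsistentP ι s r ∧ ∀ r' : Run A, ConsistentP ι s r' → r' = r := by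
  obtain ⟨a, b, hab⟩ := Fintype.exists_pair_of_one_lt_card hA
  exact ⟨fun _ => singlingOutStrategy r a b, consistentP_singlingOutStrategy ι r,
    fun _ => eq_of_consistentP_singlingOutStrategy ι r hab⟩

/-- if along every run some player is active infinitely often, then for every run
`r` there is a strategy profile whose unique consistent run is `r`. -/
theorem profile_singling_out_run (I A : Type) [Fintype I] [Nonempty I] [Fintype A]
    (hA : 2 ≤ Fintype.card A) (ι : Pos A → I)
    (hact : ∀ r : Run A, ∃ j : I, ActiveIO ι j r) (r : Run A) :
    ∃ s : I → Pos A → A, ConsistentP ι s r ∧ ∀ r' : Run A, ConsistentP ι s r' → r' = r :=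
  profile_singling_out_run_general I A hA ι r
end

section
/- In a one-player game there is a strategy admitting a continuum of consistent runs: the player has a strategy s such that the set of runs consistent with s has cardinality continuum. -/
open Cardinal

def consistentRuns {A : Type} (s : Pos A → A) : Set (Run A) :=
  {r | ∀ n : Stage, r n = s ⟨n, restrictRun r n⟩}

def copyStrategy (A : Type) : Pos A → A :=
  fun p => p.2 ⟨2 * p.1.1 - 1, by have := p.1.2; omega⟩

theorem mem_consistentRuns_copyStrategy {A : Type} {r : Run A} :
    r ∈ consistentRuns (copyStrategy A) ↔
      ∀ n : Stage, r n = r ⟨2 * n.1 - 1, by have := n.2; omega⟩ :=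
  Iff.rfl

theorem ordCompl_two_double (j : ℕ) : ordCompl[2] (2 * j) = ordCompl[2] j := by
  simpa using Nat.ordCompl_self_pow_mul j 1 Nat.prime_two

theorem ordCompl_two_odd (k : ℕ) : ordCompl[2] (2 * k + 1) = 2 * k + 1 :=
  (Nat.ordCompl_eq_self_iff_zero_or_not_dvd _ Nat.prime_two).2 (Or.inr (by omega))

def runOfOddPart {A : Type} (a : ℕ → A) : Run A :=
  fun n => a (ordCompl[2] (n.1.natAbs + 1) / 2)

theorem runOfOddPart_mem_consistentRuns {A : Type} (a : ℕ → A) :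
    runOfOddPart a ∈ consistentRuns (copyStrategy A) := by
  refine mem_consistentRuns_copyStrategy.2 fun n => ?_
  have hdouble : (2 * n.1 - 1).natAbs + 1 = 2 * (n.1.natAbs + 1) := by
    have := n.2; omega
  simp only [runOfOddPart, hdouble, ordCompl_two_double]

theorem runOfOddPart_injective {A : Type} : Function.Injective (runOfOddPart (A := A)) := by
  intro a b hab
  funext k
  have hk := congrFun hab ⟨-(2 * k : ℤ), by omega⟩
  have habs : (-(2 * k : ℤ)).natAbs + 1 = 2 * k + 1 := by omega
  simp only [runOfOddPart] at hk
  rwa [habs, ordCompl_two_odd, Nat.mul_add_div two_pos, Nat.div_eq_of_lt one_lt_two,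
    add_zero] at hk

theorem mk_stage : #Stage = ℵ₀ :=
  have : Infinite Stage := inferInstanceAs (Infinite (Set.Iic (0 : ℤ)))
  mk_eq_aleph0 Stage

theorem mk_run (A : Type) : #(Run A) = #A ^ ℵ₀ := by
  rw [← mk_stage, power_def]

theorem mk_consistentRuns_copyStrategy (A : Type) :
    #(consistentRuns (copyStrategy A)) = #A ^ ℵ₀ := by
  refine le_antisymm ((mk_set_le _).trans (mk_run A).le) ?_
  rw [← mk_nat, power_def]
  exact mk_le_of_injective (f := fun a => ⟨runOfOddPart a, runOfOddPart_mem_consistentRuns a⟩)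
    fun a b hab => runOfOddPart_injective (congrArg Subtype.val hab)

/-- in the one-player game with actions `{0,1}`, there is a strategy whose set of
consistent runs has cardinality continuum. -/
theorem strategy_with_continuum_consistent_runs :
    ∃ s : Pos (Fin 2) → Fin 2,
      Cardinal.mk {r : Run (Fin 2) | ∀ n : Stage, r n = s ⟨n, restrictRun r n⟩} =
        Cardinal.continuum := by
  refine ⟨copyStrategy (Fin 2), ?_⟩
  have := mk_consistentRuns_copyStrategy (Fin 2)
  rwa [mk_fin, Nat.cast_ofNat, two_power_aleph0] at this
end

section
/- Suppose along each run at least two players are active infinitely often. If (s, r) is an equilibrium, then there exists a strong equilibrium s* whose unique consistent run is r. Consequently, the set of equilibrium runs equals the set of strong equilibrium runs. -/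
/-- `(s, r)` is an equilibrium: `r` is consistent with `s` and, for each stage `n`, the profile
`s` induces a Nash equilibrium in the finite subgame starting at the position of `r` at stage
`n`. The latter is expressed as: for every player `i` and every profile `s'` differing from `s`
only in player `i`'s strategy, the run that agrees with `r` before stage `n` and follows `s'`
from stage `n` onward gives player `i` at most `u i r`. -/
def Equilibrium {I A : Type} (ι : Pos A → I) (u : I → Run A → ℝ)
    (s : I → Pos A → A) (r : Run A) : Prop :=
  ConsistentP ι s r ∧
  ∀ n : Stage, ∀ i : I, ∀ s' : I → Pos A → A, (∀ j : I, j ≠ i → s' j = s j) →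
    ∀ r' : Run A, (∀ k : Stage, k.1 < n.1 → r' k = r k) →
      (∀ m : Stage, n.1 ≤ m.1 →
        r' m = s' (ι ⟨m, restrictRun r' m⟩) ⟨m, restrictRun r' m⟩) →
      u i r' ≤ u i r

/-- `s` is a strong equilibrium with unique consistent run `r`: `r` is the unique run
consistent with `s`, and for every player `i` and every deviation `s'i` of her strategy, every
run consistent with the deviated profile gives player `i` at most `u i r`. -/
def StrongEquilibrium {I A : Type} [DecidableEq I] (ι : Pos A → I) (u : I → Run A → ℝ)
    (s : I → Pos A → A) (r : Run A) : Prop :=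
  ConsistentP ι s r ∧ (∀ r' : Run A, ConsistentP ι s r' → r' = r) ∧
  ∀ (i : I) (s'i : Pos A → A) (r' : Run A),
    ConsistentP ι (Function.update s i s'i) r' → u i r' ≤ u i r

/-! Change the equilibrium profile `s` only at positions whose history has left `r` infinitely
often: there, if all deviations so far were made by a single player `q`, every other player leaves
`r` as well (playing `c n ≠ r n`), and otherwise everybody plays along `r`.

A run that left `r` only finitely often starts, at some stage, a finite subgame of `s`, so the
equilibrium property of `(s, r)` bounds the payoff of a unilateral deviation. A unilateral
deviator `i` cannot make the run leave `r` infinitely often. If the deviators before some stage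
`N` form a singleton `{q}`, they do so before every earlier stage as well. Then `q`, who deviated
before `N`, cannot be a player keeping to `r`, so `q = i`; and every other player moving before
`N` would punish `i` and thereby become a deviator. So only `i` moves before `N`, against the
assumption that two players are active infinitely often. If the deviators never form a
singleton, nobody but `i` ever deviates, so they form `{i}` after all. -/

namespace InfinitePastGame

variable {I A : Type}

lemma _root_.ActiveIO.exists_lt {ι : Pos A → I} {i : I} {r : Run A} (h : ActiveIO ι i r)
    (N : ℤ) :
    ∃ n : Stage, n.1 < N ∧ ι ⟨n, restrictRun r n⟩ = i := by
  have himage := h.image Subtype.val_injective.injOn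
  have hunbdd : ¬ BddBelow (Subtype.val '' {n : Stage | ι ⟨n, restrictRun r n⟩ = i}) :=
    fun hbdd => himage (hbdd.finite_of_bddAbove ⟨0, by rintro _ ⟨n, -, rfl⟩; exact n.2⟩)
  obtain ⟨_, ⟨n, hn, rfl⟩, hlt⟩ := not_bddBelow_iff.1 hunbdd N
  exact ⟨n, hlt, hn⟩

def runDeviations (r r' : Run A) : Set ℤ :=
  {k | ∃ hk : k ≤ 0, r' ⟨k, hk⟩ ≠ r ⟨k, hk⟩}

lemma mem_runDeviations {r r' : Run A} (n : Stage) : n.1 ∈ runDeviations r r' ↔ r' n ≠ r n :=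
  ⟨fun ⟨_, h⟩ => h, fun h => ⟨n.2, h⟩⟩

def runDeviators (ι : Pos A → I) (r r' : Run A) (n : ℤ) : Set I :=
  {j | ∃ k : Stage, k.1 < n ∧ r' k ≠ r k ∧ ι ⟨k, restrictRun r' k⟩ = j}

lemma runDeviators_mono (ι : Pos A → I) (r r' : Run A) : Monotone (runDeviators ι r r') :=
  fun _ _ hmn _ ⟨k, hk, hne, hj⟩ => ⟨k, hk.trans_le hmn, hne, hj⟩

def deviationStages (r : Run A) (p : Pos A) : Set ℤ :=
  {k | ∃ hk : k < p.1.1, p.2 ⟨k, hk⟩ ≠ r ⟨k, hk.le.trans p.1.2⟩}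

def Pos.truncate (p : Pos A) (k : ℤ) (hk : k < p.1.1) : Pos A :=
  ⟨⟨k, hk.le.trans p.1.2⟩, fun k' => p.2 ⟨k'.1, k'.2.trans hk⟩⟩

def deviators (ι : Pos A → I) (r : Run A) (p : Pos A) : Set I :=
  {j | ∃ (k : ℤ) (hk : k < p.1.1),
    p.2 ⟨k, hk⟩ ≠ r ⟨k, hk.le.trans p.1.2⟩ ∧ ι (Pos.truncate p k hk) = j}

lemma deviationStages_restrictRun (r r' : Run A) (n : Stage) :
    deviationStages r ⟨n, restrictRun r' n⟩ = runDeviations r r' ∩ Set.Iio n.1 := by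
  ext k
  exact ⟨fun ⟨hk, hne⟩ => ⟨⟨hk.le.trans n.2, hne⟩, hk⟩, fun ⟨⟨_, hne⟩, hk⟩ => ⟨hk, hne⟩⟩

lemma bddBelow_deviationStages_restrictRun_iff (r r' : Run A) (n : Stage) :
    BddBelow (deviationStages r ⟨n, restrictRun r' n⟩) ↔ BddBelow (runDeviations r r') := by
  rw [deviationStages_restrictRun]
  refine ⟨fun ⟨b, hb⟩ => ⟨min b n.1, fun k hk => ?_⟩, fun h => h.mono Set.inter_subset_left⟩
  by_cases hkn : k < n.1
  · exact min_le_of_left_le (hb ⟨hk, hkn⟩)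
  · exact min_le_of_right_le (not_lt.1 hkn)

lemma deviators_restrictRun (ι : Pos A → I) (r r' : Run A) (n : Stage) :
    deviators ι r ⟨n, restrictRun r' n⟩ = runDeviators ι r r' n := by
  ext j
  exact ⟨fun ⟨k, hk, hne, hj⟩ => ⟨⟨k, hk.le.trans n.2⟩, hk, hne, hj⟩,
    fun ⟨k, hk, hne, hj⟩ => ⟨k, hk, hne, hj⟩⟩

-- All deviation stages lie below the current stage, so `BddBelow` means "finitely many".
open Classical in
noncomputable def punishingProfile (ι : Pos A → I) (r : Run A) (s : I → Pos A → A)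
    (c : Stage → A) (j : I) (p : Pos A) : A :=
  if BddBelow (deviationStages r p) then s j p
  else if ∃ q, deviators ι r p = {q} ∧ q ≠ j then c p.1 else r p.1

section

variable {ι : Pos A → I} {r r' : Run A} {s : I → Pos A → A} {c : Stage → A}

lemma punishingProfile_restrictRun_of_bddBelow (h : BddBelow (runDeviations r r')) (j : I)
    (n : Stage) :
    punishingProfile ι r s c j ⟨n, restrictRun r' n⟩ = s j ⟨n, restrictRun r' n⟩ :=
  if_pos ((bddBelow_deviationStages_restrictRun_iff r r' n).2 h)

open Classical in
lemma punishingProfile_restrictRun_of_not_bddBelow (h : ¬ BddBelow (runDeviations r r'))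
    (j : I) (n : Stage) :
    punishingProfile ι r s c j ⟨n, restrictRun r' n⟩ =
      if ∃ q, runDeviators ι r r' n = {q} ∧ q ≠ j then c n else r n := by
  rw [punishingProfile, if_neg (mt (bddBelow_deviationStages_restrictRun_iff r r' n).1 h),
    deviators_restrictRun]

open Classical in
theorem false_of_punished_deviations {i : I}
    (htwo : ∃ j₁ j₂ : I, j₁ ≠ j₂ ∧ ActiveIO ι j₁ r' ∧ ActiveIO ι j₂ r')
    (hc : ∀ n, c n ≠ r n) (hdev : ∀ N : ℤ, ∃ k : Stage, k.1 < N ∧ r' k ≠ r k)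
    (hfollow : ∀ n : Stage, ι ⟨n, restrictRun r' n⟩ ≠ i →
      r' n = if ∃ q, runDeviators ι r r' n = {q} ∧ q ≠ ι ⟨n, restrictRun r' n⟩ then c n
        else r n) :
    False := by
  set O := runDeviators ι r r'
  have hO : ∀ N, (O N).Nonempty := fun N =>
    let ⟨k, hk, hne⟩ := hdev N
    ⟨_, k, hk, hne, rfl⟩
  by_cases hsingleton : ∃ N q, O N = {q}
  · obtain ⟨N, q, hN⟩ := hsingleton
    have hbelow : ∀ k : Stage, k.1 < N → O k = {q} := fun k hk =>
      (hO k).subset_singleton_iff.1 (hN ▸ runDeviators_mono ι r r' hk.le)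
    have hq : q = i := by
      obtain ⟨k, hk, hne⟩ := hdev N
      have hkq : ι ⟨k, restrictRun r' k⟩ ∈ O N := ⟨k, hk, hne, rfl⟩
      rw [hN, Set.mem_singleton_iff] at hkq
      by_contra hqi
      refine hne ((hfollow k (hkq ▸ hqi)).trans (if_neg ?_))
      rintro ⟨q', hq', hq'k⟩
      rw [hbelow k hk, Set.singleton_eq_singleton_iff] at hq'
      exact hq'k (hq' ▸ hkq.symm)
    have hmover : ∀ k : Stage, k.1 < N → ι ⟨k, restrictRun r' k⟩ = i := by
      intro k hk
      by_contra hki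
      have hne : r' k ≠ r k := by
        rw [hfollow k hki, if_pos ⟨i, hq ▸ hbelow k hk, Ne.symm hki⟩]
        exact hc k
      have hkN : ι ⟨k, restrictRun r' k⟩ ∈ O N := ⟨k, hk, hne, rfl⟩
      rw [hN, hq] at hkN
      exact hki hkN
    obtain ⟨j₁, j₂, hj, h₁, h₂⟩ := htwo
    obtain ⟨k₁, hk₁, rfl⟩ := h₁.exists_lt N
    obtain ⟨k₂, hk₂, rfl⟩ := h₂.exists_lt N
    exact hj ((hmover k₁ hk₁).trans (hmover k₂ hk₂).symm)
  · refine hsingleton ⟨0, i, (hO 0).subset_singleton_iff.1 ?_⟩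
    rintro _ ⟨k, -, hne, rfl⟩
    by_contra hki
    exact hne ((hfollow k hki).trans (if_neg fun ⟨q, hq, _⟩ => hsingleton ⟨k, q, hq⟩))

lemma _root_.ConsistentP.of_forall_restrictRun_eq {t t' : I → Pos A → A}
    (ht : ConsistentP ι t r')
    (h : ∀ j (n : Stage), t j ⟨n, restrictRun r' n⟩ = t' j ⟨n, restrictRun r' n⟩) :
    ConsistentP ι t' r' :=
  fun n => (ht n).trans (h _ n)

lemma _root_.ConsistentP.eq_of_bddBelow_runDeviations (hr : ConsistentP ι s r)
    (hr' : ConsistentP ι s r') (h : BddBelow (runDeviations r r')) : r' = r := by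
  by_contra hne
  obtain ⟨n, hn⟩ := Function.ne_iff.1 hne
  obtain ⟨m, ⟨hm, hmr⟩, hmin⟩ := Int.exists_least_of_bdd (P := (· ∈ runDeviations r r'))
    (let ⟨b, hb⟩ := h; ⟨b, fun _ hz => hb hz⟩) ⟨n, (mem_runDeviations n).2 hn⟩
  have hpast : restrictRun r' ⟨m, hm⟩ = restrictRun r ⟨m, hm⟩ :=
    funext fun k => not_not.1 fun hk => k.2.not_ge (hmin k ((mem_runDeviations _).2 hk))
  exact hmr (by rw [hr' ⟨m, hm⟩, hr ⟨m, hm⟩, hpast])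

variable [DecidableEq I]

theorem bddBelow_runDeviations_of_consistentP_update
    (htwo : ∀ r : Run A, ∃ i j : I, i ≠ j ∧ ActiveIO ι i r ∧ ActiveIO ι j r)
    (hc : ∀ n, c n ≠ r n) {i : I} {s'i : Pos A → A}
    (hr' : ConsistentP ι (Function.update (punishingProfile ι r s c) i s'i) r') :
    BddBelow (runDeviations r r') := by
  by_contra hunbdd
  refine false_of_punished_deviations (i := i) (htwo r') hc (fun N => ?_) (fun n hn => ?_)
  · obtain ⟨k, ⟨hk, hne⟩, hkN⟩ := not_bddBelow_iff.1 hunbdd N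
    exact ⟨⟨k, hk⟩, hkN, hne⟩
  · rw [hr' n, Function.update_of_ne hn, punishingProfile_restrictRun_of_not_bddBelow hunbdd]

theorem _root_.Equilibrium.payoff_le_of_bddBelow_runDeviations {u : I → Run A → ℝ}
    (hE : Equilibrium ι u s r) {i : I} {s'i : Pos A → A}
    (hr' : ConsistentP ι (Function.update s i s'i) r') (h : BddBelow (runDeviations r r')) :
    u i r' ≤ u i r := by
  obtain ⟨b, hb⟩ := h
  refine hE.2 ⟨min (b - 1) 0, min_le_right _ _⟩ i (Function.update s i s'i)
    (fun j hj => Function.update_of_ne hj _ _) r' (fun k hk => ?_) (fun m _ => hr' m)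
  by_contra hne
  have hbk := hb ((mem_runDeviations k).2 hne)
  simp only at hk
  omega

theorem _root_.Equilibrium.strongEquilibrium_punishingProfile {u : I → Run A → ℝ}
    (hE : Equilibrium ι u s r)
    (htwo : ∀ r : Run A, ∃ i j : I, i ≠ j ∧ ActiveIO ι i r ∧ ActiveIO ι j r)
    (hc : ∀ n, c n ≠ r n) :
    StrongEquilibrium ι u (punishingProfile ι r s c) r := by
  refine ⟨fun n => ?_, fun r' hr' => ?_, fun i s'i r' hr' => ?_⟩
  · rw [punishingProfile_restrictRun_of_bddBelow (by simp [runDeviations])]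
    exact hE.1 n
  · obtain ⟨i, -⟩ := htwo r'
    have hbdd := bddBelow_runDeviations_of_consistentP_update htwo hc
      (by rwa [Function.update_eq_self i (punishingProfile ι r s c)])
    exact hE.1.eq_of_bddBelow_runDeviations
      (hr'.of_forall_restrictRun_eq (punishingProfile_restrictRun_of_bddBelow hbdd)) hbdd
  · have hbdd := bddBelow_runDeviations_of_consistentP_update htwo hc hr'
    refine hE.payoff_le_of_bddBelow_runDeviations (s'i := s'i)
      (hr'.of_forall_restrictRun_eq fun j n => ?_) hbdd
    rcases eq_or_ne j i with rfl | hj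
    · simp only [Function.update_self]
    · rw [Function.update_of_ne hj, Function.update_of_ne hj,
        punishingProfile_restrictRun_of_bddBelow hbdd]

theorem _root_.StrongEquilibrium.equilibrium {u : I → Run A → ℝ}
    (hS : StrongEquilibrium ι u s r) : Equilibrium ι u s r := by
  obtain ⟨hr, -, hdev⟩ := hS
  refine ⟨hr, fun n i s' hs' r' hpast hfuture =>
    hdev i (fun p => if p.1.1 < n.1 then r' p.1 else s' i p) r' fun k => ?_⟩
  by_cases hki : ι ⟨k, restrictRun r' k⟩ = i
  · rw [hki, Function.update_self]
    split_ifs with hkn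
    · rfl
    · rw [hfuture k (not_lt.1 hkn), hki]
  · rw [Function.update_of_ne hki]
    by_cases hkn : k.1 < n.1
    · have hpos : restrictRun r' k = restrictRun r k :=
        funext fun k' => hpast _ (k'.2.trans hkn)
      rw [hpast k hkn, hpos, hr k]
    · rw [hfuture k (not_lt.1 hkn), hs' _ hki]

end

end InfinitePastGame

theorem equilibrium_gives_strong_equilibrium_general (I A : Type)
    [DecidableEq I] [Fintype A] (hA : 2 ≤ Fintype.card A) (ι : Pos A → I)
    (u : I → Run A → ℝ)
    (htwo : ∀ r : Run A, ∃ i j : I, i ≠ j ∧ ActiveIO ι i r ∧ ActiveIO ι j r) :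
    (∀ (s : I → Pos A → A) (r : Run A), Equilibrium ι u s r →
      ∃ s' : I → Pos A → A, StrongEquilibrium ι u s' r) ∧
    {r : Run A | ∃ s : I → Pos A → A, Equilibrium ι u s r} =
      {r : Run A | ∃ s : I → Pos A → A, StrongEquilibrium ι u s r} := by
  have hstrong (s : I → Pos A → A) (r : Run A) (hE : Equilibrium ι u s r) :
      ∃ s' : I → Pos A → A, StrongEquilibrium ι u s' r := by
    choose c hc using fun n : Stage => Fintype.exists_ne_of_one_lt_card hA (r n)
    exact ⟨_, hE.strongEquilibrium_punishingProfile htwo hc⟩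
  exact ⟨hstrong, Set.ext fun r =>
    ⟨fun ⟨s, hE⟩ => hstrong s r hE, fun ⟨s, hS⟩ => ⟨s, hS.equilibrium⟩⟩⟩

/-- if along every run at least two players are active infinitely often, then
every equilibrium run is the unique consistent run of some strong equilibrium; consequently
the set of equilibrium runs equals the set of strong equilibrium runs. -/
theorem equilibrium_gives_strong_equilibrium (I A : Type) [Fintype I] [Nonempty I]
    [DecidableEq I] [Fintype A] (hA : 2 ≤ Fintype.card A) (ι : Pos A → I)
    (u : I → Run A → ℝ) (hbd : ∀ i : I, ∃ C : ℝ, ∀ r : Run A, |u i r| ≤ C)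
    (htwo : ∀ r : Run A, ∃ i j : I, i ≠ j ∧ ActiveIO ι i r ∧ ActiveIO ι j r) :
    (∀ (s : I → Pos A → A) (r : Run A), Equilibrium ι u s r →
      ∃ s' : I → Pos A → A, StrongEquilibrium ι u s' r) ∧
    {r : Run A | ∃ s : I → Pos A → A, Equilibrium ι u s r} =
      {r : Run A | ∃ s : I → Pos A → A, StrongEquilibrium ι u s r} :=
  equilibrium_gives_strong_equilibrium_general I A hA ι u htwo
end

section
/- In the one-player limsup-frequency game, every run r satisfies u(r) < 1, and hence no strong equilibrium exists: for every run r there is a run r' with u(r') > u(r). Here u(r) = φ(r) if φ(r) < 1 and u(r) = 0 if φ(r) = 1, where φ(r) = limsup_{n→−∞} (1/(−n+1))·(r(n)+⋯+r(0)). -/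
open Filter Finset

lemma card_filter_dvd (q m : ℕ) :
    ((Finset.range (m+1)).filter (fun k => q ∣ k)).card = m / q + 1 := by
  rw [Finset.range_eq_Ico, Finset.Ico_add_one_right_eq_Icc, ← Finset.Ioc_insert_left (Nat.zero_le m),
    Finset.filter_insert, if_pos (dvd_zero q),
    Finset.card_insert_of_notMem (by simp), Nat.Ioc_filter_dvd_card_eq_div]


lemma sum_indicator (q m : ℕ) :
    ∑ k ∈ Finset.range (m+1), (if q ∣ k then (0:ℝ) else 1)
      = (m : ℝ) - ((m / q : ℕ) : ℝ) := by
  have h1 : ∀ k ∈ Finset.range (m+1), (if q ∣ k then (0:ℝ) else 1)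
      = if ¬ q ∣ k then (1:ℝ) else 0 := by
    intro k _; by_cases h : q ∣ k <;> simp [h]
  rw [Finset.sum_congr rfl h1, Finset.sum_boole, Finset.filter_not,
    Finset.card_sdiff_of_subset (Finset.filter_subset _ _), Finset.card_range, card_filter_dvd]
  have := Nat.div_le_self m q
  push_cast [Nat.succ_sub_succ]
  · ring_nf
    push_cast [this]
    ring

lemma tendsto_avg (q : ℕ) (hq : 0 < q) :
    Tendsto (fun m : ℕ => ((m : ℝ) - ((m / q : ℕ) : ℝ)) / (m + 1)) atTop
      (nhds (1 - 1/(q:ℝ))) := by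
  have hq' : (0:ℝ) < q := by exact_mod_cast hq
  have hlow : Tendsto (fun m : ℕ => 1 - 1/(q:ℝ) - 1/((m:ℝ)+1)) atTop (nhds (1 - 1/(q:ℝ))) := by
    have := tendsto_one_div_add_atTop_nhds_zero_nat (𝕜 := ℝ)
    have h := (tendsto_const_nhds (x := 1 - 1/(q:ℝ)) (f := atTop)).sub this
    simpa using h
  have hhigh : Tendsto (fun _ : ℕ => 1 - 1/(q:ℝ)) atTop (nhds (1 - 1/(q:ℝ))) :=
    tendsto_const_nhds
  refine tendsto_of_tendsto_of_tendsto_of_le_of_le hlow hhigh ?_ ?_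
  · intro m
    have hm1 : (0:ℝ) < (m:ℝ) + 1 := by positivity
    have hd : (q:ℝ) * ((m / q : ℕ) : ℝ) ≤ (m:ℝ) := by
      exact_mod_cast Nat.mul_div_le m q
    simp only
    rw [le_div_iff₀ hm1]
    have key : ((m/q:ℕ):ℝ) ≤ 1/(q:ℝ)*((m:ℝ)+1) := by
      rw [div_mul_eq_mul_div, one_mul, le_div_iff₀ hq']
      nlinarith [hd]
    have h1 : (1/((m:ℝ)+1)) * ((m:ℝ)+1) = 1 := by field_simp
    nlinarith [key, h1]
  · intro m
    have hm1 : (0:ℝ) < (m:ℝ) + 1 := by positivity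
    have hd : (m:ℝ) + 1 ≤ (q:ℝ) * ((m / q : ℕ) : ℝ) + q := by
      have : m + 1 ≤ q * (m / q) + q := by
        have h1 := Nat.div_add_mod m q
        have h2 := Nat.mod_lt m hq
        omega
      exact_mod_cast this
    simp only
    rw [div_le_iff₀ hm1]
    have key : 1/(q:ℝ) * ((m:ℝ)+1) ≤ ((m/q:ℕ):ℝ) + 1 := by
      rw [div_mul_eq_mul_div, one_mul, div_le_iff₀ hq']
      nlinarith [hd]
    nlinarith [key, hm1]


/-- `phi r` is the limsup, as `n → -∞`, of the average of the run `r` over stages `n,…,0`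
(indexed here by `m = -n → ∞`). -/
noncomputable def phi (r : Run (Fin 2)) : ℝ :=
  Filter.limsup (fun m : ℕ =>
    (∑ k ∈ Finset.range (m + 1), ((r ⟨-(k : ℤ), by omega⟩).val : ℝ)) / (m + 1))
    Filter.atTop

/- The limsup-frequency payoff: `phi r` if `phi r < 1`, and `0` otherwise. -/
open Classical in
noncomputable def freqPayoff (r : Run (Fin 2)) : ℝ :=
  if phi r < 1 then phi r else 0

private lemma aux_phi_eq (q : ℕ) (hq : 0 < q) :
    phi (fun n => if q ∣ (-n.1).toNat then (0 : Fin 2) else 1) = 1 - 1/(q:ℝ) := by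
  have hfun : (fun m : ℕ =>
      (∑ k ∈ Finset.range (m + 1),
        (((fun n : Stage => if q ∣ (-n.1).toNat then (0 : Fin 2) else 1)
          ⟨-(k : ℤ), by omega⟩).val : ℝ)) / (m + 1))
      = fun m : ℕ => ((m : ℝ) - ((m / q : ℕ) : ℝ)) / (m + 1) := by
    funext m
    congr 1
    rw [← sum_indicator q m]
    refine Finset.sum_congr rfl fun k _ => ?_
    simp only [neg_neg, Int.toNat_natCast]
    by_cases h : q ∣ k <;> simp [h]
  rw [phi, hfun]
  exact (tendsto_avg q hq).limsup_eq

/-- in the one-player limsup-frequency game, every run has payoff strictly less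
than `1`, and hence no strong equilibrium exists: every run is strictly improved upon by some
other run. -/
theorem limsup_game_no_strong_equilibrium :
    (∀ r : Run (Fin 2), freqPayoff r < 1) ∧
      ∀ r : Run (Fin 2), ∃ r' : Run (Fin 2), freqPayoff r < freqPayoff r' := by
  have part1 : ∀ r : Run (Fin 2), freqPayoff r < 1 := by
    intro r
    rw [freqPayoff]
    split
    · assumption
    · norm_num
  refine ⟨part1, fun r => ?_⟩
  have hr := part1 r
  obtain ⟨n, hn⟩ := exists_nat_one_div_lt (by linarith : (0:ℝ) < 1 - freqPayoff r)
  set q : ℕ := n + 1 with hqdef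
  have hq : 0 < q := Nat.succ_pos n
  refine ⟨fun m => if q ∣ (-m.1).toNat then (0 : Fin 2) else 1, ?_⟩
  have hphi := aux_phi_eq q hq
  have hqR : ((q:ℕ):ℝ) = (n:ℝ) + 1 := by push_cast [hqdef]; ring
  have hq' : (0:ℝ) < (q:ℝ) := by exact_mod_cast hq
  have hlt1 : phi (fun m => if q ∣ (-m.1).toNat then (0 : Fin 2) else 1) < 1 := by
    rw [hphi]
    have : 0 < 1/(q:ℝ) := by positivity
    linarith
  have heq : freqPayoff (fun m => if q ∣ (-m.1).toNat then (0 : Fin 2) else 1)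
      = 1 - 1/(q:ℝ) := by
    rw [freqPayoff, if_pos hlt1, hphi]
  rw [heq, hqR]
  linarith
end
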